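/- Consider the 3×6 matrix of linear forms in the variables y₀,…,y₅ given by N = [[−y₄, y₃, 0, −y₁, y₀, 0], [−y₅, 0, y₃, −y₂, 0, y₀], [0, −y₅, y₄, 0, −y₂, y₁]] (the flipped matrix of the type-(f) normal form). Then the rank ≤ 1 locus of N is empty: for every nonzero vector y = (y₀,…,y₅) ∈ ℂ⁶, the complex 3×6 matrix obtained by evaluating N at y has rank at least 2 (equivalently, some 2×2 minor of N(y) is nonzero). -/
import Mathlib


open Matrix MvPolynomial

noncomputable section

/-- The flipped matrix of the type-(f) normal form: a `3×6` matrix of linear forms in the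
variables `y₀, …, y₅`. -/
def flippedF : Matrix (Fin 3) (Fin 6) (MvPolynomial (Fin 6) ℂ) :=
  !![-(X 4), X 3, 0, -(X 1), X 0, 0;
     -(X 5), 0, X 3, -(X 2), 0, X 0;
     0, -(X 5), X 4, 0, -(X 2), X 1]

@[simp]
lemma cons_val_five' {α : Type*} {m : ℕ} (x : α) (u : Fin m.succ.succ.succ.succ.succ → α) :
    Matrix.vecCons x u 5 = Matrix.vecHead (Matrix.vecTail (Matrix.vecTail (Matrix.vecTail (Matrix.vecTail u)))) :=
  rfl

lemma aux_minor {M : Matrix (Fin 3) (Fin 6) ℂ} {i₀ i₁ : Fin 3} {j₀ j₁ : Fin 6}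
    (h : M i₀ j₀ * M i₁ j₁ - M i₀ j₁ * M i₁ j₀ ≠ 0) : 2 ≤ M.rank := by
  have hli : LinearIndependent ℂ ![Mᵀ j₀, Mᵀ j₁] := by
    rw [LinearIndependent.pair_iff]
    intro s t hst
    have h0 : s * M i₀ j₀ + t * M i₀ j₁ = 0 := congrFun hst i₀
    have h1 : s * M i₁ j₀ + t * M i₁ j₁ = 0 := congrFun hst i₁
    constructor
    · by_contra hs
      apply h
      have : M i₀ j₀ = -(t/s) * M i₀ j₁ := by field_simp; linear_combination h0
      have h2 : M i₁ j₀ = -(t/s) * M i₁ j₁ := by field_simp; linear_combination h1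
      rw [this, h2]; ring
    · by_contra ht
      apply h
      have : M i₀ j₁ = -(s/t) * M i₀ j₀ := by field_simp; linear_combination h0
      have h2 : M i₁ j₁ = -(s/t) * M i₁ j₀ := by field_simp; linear_combination h1
      rw [this, h2]; ring
  rw [Matrix.rank_eq_finrank_span_cols]
  have hle : Submodule.span ℂ (Set.range ![Mᵀ j₀, Mᵀ j₁]) ≤ Submodule.span ℂ (Set.range Mᵀ) := by
    apply Submodule.span_mono
    rintro x ⟨k, rfl⟩
    fin_cases k <;> exact ⟨_, rfl⟩
  have h2 := finrank_span_eq_card hli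
  calc 2 = Module.finrank ℂ (Submodule.span ℂ (Set.range ![Mᵀ j₀, Mᵀ j₁])) := by
        rw [h2]; simp
    _ ≤ _ := Submodule.finrank_mono hle

/-- The rank `≤ 1` locus of the flipped matrix of the type-(f) normal form is empty:
at every nonzero point `y ∈ ℂ⁶` the evaluated matrix has rank at least 2. -/
theorem statement18 (y : Fin 6 → ℂ) (hy : y ≠ 0) :
    2 ≤ (flippedF.map (MvPolynomial.eval y)).rank := by
  obtain ⟨i, hi⟩ := Function.ne_iff.mp hy
  simp only [Pi.zero_apply] at hi
  fin_cases i
  · apply aux_minor (i₀ := 0) (i₁ := 1) (j₀ := 4) (j₁ := 5)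
    simp [flippedF]; simpa using hi
  · apply aux_minor (i₀ := 0) (i₁ := 2) (j₀ := 3) (j₁ := 5)
    simp [flippedF]; simpa using hi
  · apply aux_minor (i₀ := 1) (i₁ := 2) (j₀ := 3) (j₁ := 4)
    simp [flippedF]; simpa using hi
  · apply aux_minor (i₀ := 0) (i₁ := 1) (j₀ := 1) (j₁ := 2)
    simp [flippedF]; simpa using hi
  · apply aux_minor (i₀ := 0) (i₁ := 2) (j₀ := 0) (j₁ := 2)
    simp [flippedF]; simpa using hi
  · apply aux_minor (i₀ := 1) (i₁ := 2) (j₀ := 0) (j₁ := 1)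
    simp [flippedF]; simpa using hi
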